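/- arXiv:2508.12700 — 2 statements merged into one kernel-verified Lean document; each statement's English description precedes it below -/
import Mathlib

section
/- Let n ≥ 2, k ≥ 1, ε ∈ (0,1), r₀ ∈ (0,1/2), and b(r) = (n−2)/r + 2(r−r₀)₊/(ε + (r−r₀)₊²). Let h be a positive C¹ function on [r₀/2, 1] satisfying r^k ≤ h(r) ≤ 1. Then there exists C > 0 depending only on n, k, and r₀ such that for all t, r ∈ [r₀/2, 1]: exp(∫_{r₀/2}^{t} (2h'(s)/h(s) + b(s)) ds) ≤ C (ε + (t−r₀)₊²)/ε, and exp(−∫_{r₀/2}^{r} (2h'(s)/h(s) + b(s)) ds) ≤ C ε/(ε + (r−r₀)₊²). -/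
/-!
The integrand is the logarithmic derivative of
`W(s) = h(s)² s^(n-2) (ε + (s - r₀)₊²)`, so the two exponentials equal `W(t) / W(r₀/2)` and
`W(r₀/2) / W(r)`. On `[r₀/2, 1]` the bounds `s^k ≤ h(s) ≤ 1` squeeze `W(s)` between
`(r₀/2)^(2k+n-2) (ε + (s - r₀)₊²)` and `ε + (s - r₀)₊²`, and `W(r₀/2)` is comparable
to `ε` because `r₀/2 < r₀`.
-/

open Set Real

lemma hasDerivAt_max_zero_sq_of_ne {y : ℝ} (hy : y ≠ 0) :
    HasDerivAt (fun x : ℝ => max x 0 ^ 2) (2 * max y 0) y := by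
  rcases hy.lt_or_gt with hy | hy
  · have hzero : (fun _ : ℝ => (0 : ℝ)) =ᶠ[nhds y] fun x => max x 0 ^ 2 := by
      filter_upwards [eventually_lt_nhds hy] with x hx
      simp [max_eq_right hx.le]
    simpa [max_eq_right hy.le] using
      (hasDerivAt_const y (0 : ℝ)).congr_of_eventuallyEq hzero.symm
  · have hsq : (fun x : ℝ => x ^ 2) =ᶠ[nhds y] fun x => max x 0 ^ 2 := by
      filter_upwards [eventually_gt_nhds hy] with x hx
      simp [max_eq_left hx.le]
    simpa [max_eq_left hy.le] using (hasDerivAt_pow 2 y).congr_of_eventuallyEq hsq.symm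

lemma hasDerivAt_max_zero_sq (y : ℝ) :
    HasDerivAt (fun x : ℝ => max x 0 ^ 2) (2 * max y 0) y :=
  hasDerivAt_of_hasDerivAt_of_ne' (fun _ hx => hasDerivAt_max_zero_sq_of_ne hx)
    (by fun_prop) (by fun_prop) y

lemma div_le_inv_mul_div_of_le_of_mul_le {D x y u v : ℝ} (hD : 0 < D) (hv : 0 < v) (hu : 0 ≤ u)
    (hx : x ≤ u) (hy : D * v ≤ y) : x / y ≤ D⁻¹ * u / v :=
  calc x / y ≤ u / (D * v) := div_le_div₀ hu hx (by positivity) hy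
    _ = D⁻¹ * u / v := by field_simp

noncomputable def radialWeight (m r₀ ε : ℝ) (h : ℝ → ℝ) (s : ℝ) : ℝ :=
  h s ^ 2 * s ^ m * (ε + max (s - r₀) 0 ^ 2)

section
variable {m r₀ ε a b : ℝ} {h h' : ℝ → ℝ}

lemma radialWeight_pos (hε : 0 < ε) {s : ℝ} (hs : 0 < s) (hh : 0 < h s) :
    0 < radialWeight m r₀ ε h s := by
  unfold radialWeight; positivity

lemma log_radialWeight (hε : 0 < ε) {s : ℝ} (hs : 0 < s) (hh : 0 < h s) :
    log (radialWeight m r₀ ε h s) =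
      2 * log (h s) + (m * log s + log (ε + max (s - r₀) 0 ^ 2)) := by
  rw [radialWeight, log_mul (by positivity) (by positivity),
    log_mul (by positivity) (by positivity), log_pow, log_rpow hs]
  push_cast; ring

lemma hasDerivAt_log_radialWeight (hε : 0 < ε) {y : ℝ} (hy : 0 < y) (hhy : 0 < h y)
    (hh : HasDerivAt h (h' y) y) :
    HasDerivAt (fun s => 2 * log (h s) + (m * log s + log (ε + max (s - r₀) 0 ^ 2)))
      (2 * h' y / h y + (m / y + 2 * max (y - r₀) 0 / (ε + max (y - r₀) 0 ^ 2))) y := by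
  have hq : HasDerivAt (fun s => ε + max (s - r₀) 0 ^ 2) (2 * max (y - r₀) 0) y := by
    simpa using
      ((hasDerivAt_max_zero_sq (y - r₀)).comp y ((hasDerivAt_id y).sub_const r₀)).const_add ε
  refine (((hh.log hhy.ne').const_mul 2).fun_add (((hasDerivAt_log hy.ne').const_mul m).fun_add
    (hq.log (by positivity)))).congr_deriv ?_
  ring

theorem integral_eq_log_radialWeight_div (ha : 0 < a) (hab : a ≤ b) (hε : 0 < ε)
    (hh : ∀ s ∈ Icc a b, HasDerivWithinAt h (h' s) (Icc a b) s)
    (hh' : ContinuousOn h' (Icc a b)) (hpos : ∀ s ∈ Icc a b, 0 < h s) :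
    ∫ s in a..b, (2 * h' s / h s + (m / s + 2 * max (s - r₀) 0 / (ε + max (s - r₀) 0 ^ 2))) =
      log (radialWeight m r₀ ε h b / radialWeight m r₀ ε h a) := by
  have hs : ∀ s ∈ Icc a b, 0 < s := fun s hs => ha.trans_le hs.1
  have hhc : ContinuousOn h (Icc a b) := fun s hs => (hh s hs).continuousWithinAt
  have hqc : ContinuousOn (fun s => ε + max (s - r₀) 0 ^ 2) (Icc a b) := by fun_prop
  have ha' : a ∈ Icc a b := left_mem_Icc.2 hab
  have hb' : b ∈ Icc a b := right_mem_Icc.2 hab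
  rw [log_div (radialWeight_pos hε (hs b hb') (hpos b hb')).ne'
      (radialWeight_pos hε (hs a ha') (hpos a ha')).ne',
    log_radialWeight hε (hs b hb') (hpos b hb'), log_radialWeight hε (hs a ha') (hpos a ha')]
  apply intervalIntegral.integral_eq_sub_of_hasDeriv_right_of_le hab
  · exact (continuousOn_const.mul (hhc.log fun s hs' => (hpos s hs').ne')).add
      ((continuousOn_const.mul (continuousOn_id.log fun s hs' => (hs s hs').ne')).add
        (hqc.log fun s _ => by positivity))
  · intro y hy
    have hy' := Ioo_subset_Icc_self hy
    exact (hasDerivAt_log_radialWeight hε (hs y hy') (hpos y hy')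
      ((hh y hy').hasDerivAt (Icc_mem_nhds hy.1 hy.2))).hasDerivWithinAt
  · apply ContinuousOn.intervalIntegrable
    rw [uIcc_of_le hab]
    exact ((continuousOn_const.mul hh').div hhc fun s hs' => (hpos s hs').ne').add
      ((continuousOn_const.div continuousOn_id fun s hs' => (hs s hs').ne').add
        ((by fun_prop : ContinuousOn (fun s => 2 * max (s - r₀) 0) (Icc a b)).div hqc
          fun s _ => by positivity))

lemma radialWeight_le_of_le_one (hε : 0 ≤ ε) (hm : 0 ≤ m) {s : ℝ} (hs0 : 0 ≤ s)
    (hs1 : s ≤ 1) (hh0 : 0 ≤ h s) (hh1 : h s ≤ 1) :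
    radialWeight m r₀ ε h s ≤ ε + max (s - r₀) 0 ^ 2 :=
  mul_le_of_le_one_left (by positivity)
    (mul_le_one₀ (pow_le_one₀ hh0 hh1) (rpow_nonneg hs0 m) (rpow_le_one hs0 hs1 hm))

lemma le_radialWeight_of_pow_le (hε : 0 ≤ ε) (hm : 0 ≤ m) (ha : 0 < a) {s : ℝ}
    (has : a ≤ s) {k : ℕ} (hk : s ^ k ≤ h s) :
    (a ^ k) ^ 2 * a ^ m * (ε + max (s - r₀) 0 ^ 2) ≤ radialWeight m r₀ ε h s := by
  have hak : a ^ k ≤ h s := (pow_le_pow_left₀ ha.le has k).trans hk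
  unfold radialWeight
  gcongr

end

theorem stmt13_general (n k : ℕ) (hn : 2 ≤ n) (r₀ : ℝ)
    (hr₀ : r₀ ∈ Ioo (0:ℝ) (1/2)) :
    ∃ C : ℝ, 0 < C ∧
      ∀ ε : ℝ, ε ∈ Ioo (0:ℝ) 1 →
        ∀ h h' : ℝ → ℝ,
          (∀ s ∈ Icc (r₀/2) 1, HasDerivWithinAt h (h' s) (Icc (r₀/2) 1) s) →
          ContinuousOn h' (Icc (r₀/2) 1) →
          (∀ s ∈ Icc (r₀/2) 1, 0 < h s) →
          (∀ s ∈ Icc (r₀/2) 1, s ^ k ≤ h s ∧ h s ≤ 1) →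
          ∀ t ∈ Icc (r₀/2) 1, ∀ r ∈ Icc (r₀/2) 1,
            Real.exp (∫ s in (r₀/2)..t,
                (2 * h' s / h s +
                  (((n : ℝ) - 2)/s + 2 * max (s - r₀) 0 / (ε + max (s - r₀) 0 ^ 2)))) ≤
              C * (ε + max (t - r₀) 0 ^ 2) / ε ∧
            Real.exp (-∫ s in (r₀/2)..r,
                (2 * h' s / h s +
                  (((n : ℝ) - 2)/s + 2 * max (s - r₀) 0 / (ε + max (s - r₀) 0 ^ 2)))) ≤
              C * ε / (ε + max (r - r₀) 0 ^ 2) := by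
  obtain ⟨hr₀0, hr₀half⟩ := hr₀
  set a := r₀ / 2
  set m : ℝ := (n : ℝ) - 2
  have ha : 0 < a := by positivity
  have har : a < r₀ := half_lt_self hr₀0
  have hm : 0 ≤ m := sub_nonneg.2 (by exact_mod_cast hn)
  set D := (a ^ k) ^ 2 * a ^ m
  have hD : 0 < D := by positivity
  refine ⟨D⁻¹, inv_pos.2 hD, fun ε ⟨hε0, _⟩ h h' hd hd' hpos hbound t ht r hr => ?_⟩
  set W := radialWeight m r₀ ε h
  have hint : ∀ x ∈ Icc a 1, ∫ s in a..x, (2 * h' s / h s + (m / s + 2 * max (s - r₀) 0 /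
      (ε + max (s - r₀) 0 ^ 2))) = log (W x / W a) := fun x hx =>
    integral_eq_log_radialWeight_div ha hx.1 hε0
      (fun s hs => (hd s ⟨hs.1, hs.2.trans hx.2⟩).mono (Icc_subset_Icc_right hx.2))
      (hd'.mono (Icc_subset_Icc_right hx.2)) (fun s hs => hpos s ⟨hs.1, hs.2.trans hx.2⟩)
  have hWpos : ∀ x ∈ Icc a 1, 0 < W x := fun x hx =>
    radialWeight_pos hε0 (ha.trans_le hx.1) (hpos x hx)
  have hlow : ∀ x ∈ Icc a 1, D * (ε + max (x - r₀) 0 ^ 2) ≤ W x := fun x hx =>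
    le_radialWeight_of_pow_le hε0.le hm ha hx.1 (hbound x hx).1
  have hup : ∀ x ∈ Icc a 1, W x ≤ ε + max (x - r₀) 0 ^ 2 := fun x hx =>
    radialWeight_le_of_le_one hε0.le hm (ha.le.trans hx.1) hx.2 (hpos x hx).le (hbound x hx).2
  have haa : a ∈ Icc a 1 := ⟨le_rfl, by linarith⟩
  have hqa : ε + max (a - r₀) 0 ^ 2 = ε := by simp [har.le]
  have hWa := hlow a haa
  have hWa' := hup a haa
  rw [hqa] at hWa hWa'
  constructor
  · rw [hint t ht, exp_log (div_pos (hWpos t ht) (hWpos a haa))]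
    exact div_le_inv_mul_div_of_le_of_mul_le hD hε0 (by positivity) (hup t ht) hWa
  · rw [hint r hr, ← log_inv, inv_div, exp_log (div_pos (hWpos a haa) (hWpos r hr))]
    exact div_le_inv_mul_div_of_le_of_mul_le hD (by positivity) hε0.le hWa' (hlow r hr)

/-- For `n ≥ 2`, `k ≥ 1`, `ε ∈ (0,1)`, `r₀ ∈ (0,1/2)`,
`b(r) = (n−2)/r + 2(r−r₀)₊/(ε + (r−r₀)₊²)`, and `h` a positive `C¹` function on
`[r₀/2, 1]` with `r^k ≤ h(r) ≤ 1`, there is `C > 0` depending only on `n`, `k`, `r₀`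
such that for all `t, r ∈ [r₀/2, 1]`:
`exp(∫_{r₀/2}^{t} (2h'/h + b)) ≤ C (ε + (t−r₀)₊²)/ε` and
`exp(−∫_{r₀/2}^{r} (2h'/h + b)) ≤ C ε/(ε + (r−r₀)₊²)`. -/
theorem stmt13 (n k : ℕ) (hn : 2 ≤ n) (hk : 1 ≤ k) (r₀ : ℝ)
    (hr₀ : r₀ ∈ Ioo (0:ℝ) (1/2)) :
    ∃ C : ℝ, 0 < C ∧
      ∀ ε : ℝ, ε ∈ Ioo (0:ℝ) 1 →
        ∀ h h' : ℝ → ℝ,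
          (∀ s ∈ Icc (r₀/2) 1, HasDerivWithinAt h (h' s) (Icc (r₀/2) 1) s) →
          ContinuousOn h' (Icc (r₀/2) 1) →
          (∀ s ∈ Icc (r₀/2) 1, 0 < h s) →
          (∀ s ∈ Icc (r₀/2) 1, s ^ k ≤ h s ∧ h s ≤ 1) →
          ∀ t ∈ Icc (r₀/2) 1, ∀ r ∈ Icc (r₀/2) 1,
            Real.exp (∫ s in (r₀/2)..t,
                (2 * h' s / h s +
                  (((n : ℝ) - 2)/s + 2 * max (s - r₀) 0 / (ε + max (s - r₀) 0 ^ 2)))) ≤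
              C * (ε + max (t - r₀) 0 ^ 2) / ε ∧
            Real.exp (-∫ s in (r₀/2)..r,
                (2 * h' s / h s +
                  (((n : ℝ) - 2)/s + 2 * max (s - r₀) 0 / (ε + max (s - r₀) 0 ^ 2)))) ≤
              C * ε / (ε + max (r - r₀) 0 ^ 2) :=
  stmt13_general n k hn r₀ hr₀
end

section
/- Let n ≥ 2, k ≥ 1, γ ∈ (0,1), ε ∈ (0,1/4), r₀ ∈ (0,1/2), C₀ > 0, and b(r) = (n−2)/r + 2(r−r₀)₊/(ε + (r−r₀)₊²). Let V ∈ C²((0,1)) ∩ C([0,1)) satisfy V(0) = 0, |V(r)| ≤ C₀ on (0,1), |V'(r₀/2)| ≤ C₀, and V''(r) + b(r) V'(r) − (k(k+n−3)/r²) V(r) = A'(r) + B(r) on (0,1), where A ∈ C¹((0,1)) and B ∈ C((0,1)) satisfy |A(r)| ≤ C₀ (r−r₀)₊^{γ}/(ε + (r−r₀)₊²)^{1/2} and |B(r)| ≤ C₀ (r−r₀)₊^{γ}/(ε + (r−r₀)₊²) for 0 < r < 1. Then |V'(r)| ≤ C (ε + (r−r₀)₊²)^{(γ−1)/2} for all r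 ∈ [r₀/2, 1), where C > 0 depends only on n, k, r₀, γ, and C₀ (in particular C is independent of ε). -/
open Set

/-- The coefficient `b(r) = (n−2)/r + 2(r−r₀)₊/(ε + (r−r₀)₊²)`. -/
noncomputable def bCoeff (n : ℕ) (r₀ ε r : ℝ) : ℝ :=
  ((n : ℝ) - 2)/r + 2 * max (r - r₀) 0 / (ε + max (r - r₀) 0 ^ 2)

/-!
The operator `V'' + b V'` has the integrating factor `μ(r) = r^(n-2) (ε + (r-r₀)₊²)`, since
`μ' = b μ`. Hence the flux `μ (V' - A)` has derivative `μ (B + q V) - μ b A`, with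
`q = k(k+n-3)/r²`, and the hypotheses bound this by `K (ε + (r-r₀)₊^γ)` on `[r₀/2, 1)`, with `K`
independent of `ε`. At `r₀/2` the flux is at most `C₀ ε` because `A` vanishes there, so
comparison with the primitive of that bound gives
`|μ (V' - A)| ≲ ε + (r-r₀)₊^(γ+1) ≲ (ε + (r-r₀)₊²)^((γ+1)/2)`.
Dividing by `μ ≳ ε + (r-r₀)₊²` and adding the bound on `A` gives the claim.
-/

lemma self_le_two_mul_rpow {X p : ℝ} (hX0 : 0 ≤ X) (hX2 : X ≤ 2) (hp0 : 0 ≤ p) (hp1 : p ≤ 1) :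
    X ≤ 2 * X ^ p := by
  have h : X ^ (1 - p) ≤ 2 :=
    calc X ^ (1 - p) ≤ 2 ^ (1 - p) := Real.rpow_le_rpow hX0 hX2 (by linarith)
      _ ≤ 2 ^ (1 : ℝ) := Real.rpow_le_rpow_of_exponent_le (by norm_num) (by linarith)
      _ = 2 := Real.rpow_one 2
  calc X = X ^ p * X ^ (1 - p) := by
        rw [← Real.rpow_add' hX0 (by norm_num), add_sub_cancel, Real.rpow_one]
    _ ≤ 2 * X ^ p := by nlinarith [Real.rpow_nonneg hX0 p]

lemma rpow_le_rpow_half_of_sq_le {w X p : ℝ} (hw : 0 ≤ w) (h : w ^ 2 ≤ X) (hp : 0 ≤ p) :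
    w ^ p ≤ X ^ (p / 2) :=
  calc w ^ p = (w ^ 2) ^ (p / 2) := by
        rw [← Real.rpow_natCast, ← Real.rpow_mul hw]; ring_nf
    _ ≤ X ^ (p / 2) := Real.rpow_le_rpow (by positivity) h (by linarith)

lemma abs_div_sq_le {κ c t : ℝ} (hc : 0 < c) (ht : c ≤ t) : |κ / t ^ 2| ≤ |κ| / c ^ 2 := by
  rw [abs_div, abs_of_pos (pow_pos (hc.trans_le ht) 2)]
  exact div_le_div_of_nonneg_left (abs_nonneg κ) (by positivity) (pow_le_pow_left₀ hc.le ht 2)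

lemma hasDerivAt_max_sub_zero_rpow (a x : ℝ) {p : ℝ} (hp : 1 < p) :
    HasDerivAt (fun y => max (y - a) 0 ^ p) (p * max (x - a) 0 ^ (p - 1)) x := by
  have hL : ∀ z ≤ a, HasDerivWithinAt (fun y => max (y - a) 0 ^ p)
      (p * max (z - a) 0 ^ (p - 1)) (Iic a) z := by
    intro z hz
    have hzero : ∀ y ≤ a, max (y - a) 0 = 0 := fun y hy => max_eq_right (by linarith)
    have h0 : ∀ y ∈ Iic a, max (y - a) 0 ^ p = 0 := fun y hy => by
      rw [hzero y hy, Real.zero_rpow (by linarith)]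
    rw [hzero z hz, Real.zero_rpow (by linarith), mul_zero]
    exact (hasDerivWithinAt_const z _ 0).congr h0 (h0 z hz)
  have hR : ∀ z, a ≤ z → HasDerivWithinAt (fun y => max (y - a) 0 ^ p)
      (p * max (z - a) 0 ^ (p - 1)) (Ici a) z := by
    intro z hz
    have hpos : ∀ y ∈ Ici a, max (y - a) 0 = y - a := fun y hy => max_eq_left (sub_nonneg.2 hy)
    have h := ((Real.hasDerivAt_rpow_const (x := z - a) (Or.inr hp.le)).comp z
      ((hasDerivAt_id z).sub_const a)).hasDerivWithinAt (s := Ici a)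
    rw [hpos z hz]
    simpa using h.congr (fun y hy => by simp [hpos y hy]) (by simp [hpos z hz])
  rcases lt_trichotomy x a with hx | rfl | hx
  · exact (hL x hx.le).hasDerivAt (Iic_mem_nhds hx)
  · simpa using (hL x le_rfl).union (hR x le_rfl)
  · exact (hR x hx.le).hasDerivAt (Ici_mem_nhds hx)

noncomputable def integratingFactor (n : ℕ) (r₀ ε t : ℝ) : ℝ :=
  t ^ ((n : ℝ) - 2) * (ε + max (t - r₀) 0 ^ 2)

lemma hasDerivAt_integratingFactor (n : ℕ) (r₀ : ℝ) {ε t : ℝ} (hε : 0 < ε) (ht : 0 < t) :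
    HasDerivAt (integratingFactor n r₀ ε) (integratingFactor n r₀ ε t * bCoeff n r₀ ε t) t := by
  have hsq : HasDerivAt (fun y => max (y - r₀) 0 ^ 2) (2 * max (t - r₀) 0) t := by
    have h := hasDerivAt_max_sub_zero_rpow r₀ t one_lt_two
    norm_num [Real.rpow_two] at h
    exact h
  have hX : 0 < ε + max (t - r₀) 0 ^ 2 := by positivity
  refine ((Real.hasDerivAt_rpow_const (p := (n : ℝ) - 2) (Or.inl ht.ne')).fun_mul
    (hsq.const_add ε)).congr_deriv ?_
  rw [integratingFactor, bCoeff, Real.rpow_sub_one ht.ne']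
  field_simp

noncomputable def flux (n : ℕ) (r₀ ε : ℝ) (V A : ℝ → ℝ) (t : ℝ) : ℝ :=
  integratingFactor n r₀ ε t * (deriv V t - A t)

lemma hasDerivAt_flux {n : ℕ} {r₀ ε t : ℝ} {V A B q : ℝ → ℝ} (hε : 0 < ε) (ht : 0 < t)
    (hV : DifferentiableAt ℝ (deriv V) t) (hA : DifferentiableAt ℝ A t)
    (hode : deriv (deriv V) t + bCoeff n r₀ ε t * deriv V t - q t * V t = deriv A t + B t) :
    HasDerivAt (flux n r₀ ε V A)
      (integratingFactor n r₀ ε t * (B t + q t * V t - bCoeff n r₀ ε t * A t)) t := by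
  refine ((hasDerivAt_integratingFactor n r₀ hε ht).fun_mul
    (hV.hasDerivAt.fun_sub hA.hasDerivAt)).congr_deriv ?_
  linear_combination integratingFactor n r₀ ε t * hode

section PointwiseBounds

variable {n : ℕ} {r₀ ε t : ℝ}

lemma integratingFactor_nonneg (ht : 0 ≤ t) (hε : 0 ≤ ε) : 0 ≤ integratingFactor n r₀ ε t := by
  unfold integratingFactor
  positivity

lemma integratingFactor_le (hn : 2 ≤ n) (ht0 : 0 ≤ t) (ht1 : t ≤ 1) (hε : 0 ≤ ε) :
    integratingFactor n r₀ ε t ≤ ε + max (t - r₀) 0 ^ 2 := by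
  have hn' : (0 : ℝ) ≤ (n : ℝ) - 2 := by rw [sub_nonneg]; exact_mod_cast hn
  exact mul_le_of_le_one_left (by positivity) (Real.rpow_le_one ht0 ht1 hn')

lemma bCoeff_nonneg (hn : 2 ≤ n) (ht : 0 ≤ t) (hε : 0 ≤ ε) : 0 ≤ bCoeff n r₀ ε t := by
  have hn' : (0 : ℝ) ≤ (n : ℝ) - 2 := by rw [sub_nonneg]; exact_mod_cast hn
  unfold bCoeff
  positivity

lemma bCoeff_mul_sqrt_le (hn : 2 ≤ n) (hr₀ : 0 < r₀) (ht : r₀ / 2 ≤ t) (hε : 0 < ε)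
    (hX : ε + max (t - r₀) 0 ^ 2 ≤ 4) :
    bCoeff n r₀ ε t * √(ε + max (t - r₀) 0 ^ 2) ≤ 4 * ((n : ℝ) - 2) / r₀ + 2 := by
  set w := max (t - r₀) 0
  set X := ε + w ^ 2
  have hn' : (0 : ℝ) ≤ (n : ℝ) - 2 := by rw [sub_nonneg]; exact_mod_cast hn
  have hX0 : 0 < X := by positivity
  have hsqrt : √X ≤ 2 := Real.sqrt_le_iff.2 ⟨by norm_num, by linarith⟩
  have hwX : w ≤ √X := (Real.le_sqrt (le_max_right _ _) hX0.le).2 (by linarith)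
  have h1 : ((n : ℝ) - 2) / t * √X ≤ 4 * ((n : ℝ) - 2) / r₀ := by
    calc ((n : ℝ) - 2) / t * √X ≤ ((n : ℝ) - 2) / (r₀ / 2) * 2 := by
          gcongr
      _ = 4 * ((n : ℝ) - 2) / r₀ := by field_simp; ring
  have h2 : 2 * w / X * √X ≤ 2 := by
    rw [div_mul_eq_mul_div, div_le_iff₀ hX0]
    nlinarith [Real.mul_self_sqrt hX0.le, Real.sqrt_nonneg X]
  calc bCoeff n r₀ ε t * √X = ((n : ℝ) - 2) / t * √X + 2 * w / X * √X := by
        rw [bCoeff]; ring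
    _ ≤ 4 * ((n : ℝ) - 2) / r₀ + 2 := add_le_add h1 h2

end PointwiseBounds

noncomputable def fluxDerivConst (n : ℕ) (Q r₀ C₀ : ℝ) : ℝ :=
  (3 + Q + 4 * ((n : ℝ) - 2) / r₀) * C₀

lemma fluxDerivConst_nonneg {n : ℕ} {Q r₀ C₀ : ℝ} (hn : 2 ≤ n) (hQ : 0 ≤ Q) (hr₀ : 0 < r₀)
    (hC₀ : 0 ≤ C₀) : 0 ≤ fluxDerivConst n Q r₀ C₀ := by
  have hn' : (0 : ℝ) ≤ (n : ℝ) - 2 := by rw [sub_nonneg]; exact_mod_cast hn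
  unfold fluxDerivConst
  positivity

lemma integratingFactor_mul_bCoeff_mul_abs_le {n : ℕ} {r₀ ε γ t a C₀ : ℝ} (hn : 2 ≤ n)
    (hr₀ : 0 < r₀) (hε : 0 < ε) (hε1 : ε ≤ 1) (ht : r₀ / 2 ≤ t) (ht1 : t ≤ 1)
    (ha : |a| ≤ C₀ * max (t - r₀) 0 ^ γ / (ε + max (t - r₀) 0 ^ 2) ^ ((1 : ℝ) / 2)) :
    integratingFactor n r₀ ε t * (bCoeff n r₀ ε t * |a|) ≤
      (4 * ((n : ℝ) - 2) / r₀ + 2) * (C₀ * max (t - r₀) 0 ^ γ) := by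
  have hbX := bCoeff_mul_sqrt_le hn hr₀ ht hε
  set w := max (t - r₀) 0
  set X := ε + w ^ 2
  set β := bCoeff n r₀ ε t
  rw [← Real.sqrt_eq_rpow] at ha
  have ht0 : 0 < t := by linarith
  have hX0 : 0 < X := by positivity
  have hw0 : 0 ≤ w := le_max_right _ _
  have hw1 : w ≤ 1 := max_le (by linarith) zero_le_one
  have hX4 : X ≤ 4 := by change ε + w ^ 2 ≤ 4; nlinarith
  have hβ0 : 0 ≤ β := bCoeff_nonneg hn ht0.le hε.le
  have hXa : √X * |a| ≤ C₀ * w ^ γ := by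
    rw [mul_comm]; exact (le_div_iff₀ (Real.sqrt_pos.2 hX0)).1 ha
  calc integratingFactor n r₀ ε t * (β * |a|) ≤ X * (β * |a|) := by
        gcongr; exact integratingFactor_le hn ht0.le ht1 hε.le
    _ = (β * √X) * (√X * |a|) := by
        linear_combination -(β * |a|) * Real.mul_self_sqrt hX0.le
    _ ≤ (4 * ((n : ℝ) - 2) / r₀ + 2) * (C₀ * w ^ γ) :=
        mul_le_mul (hbX hX4) hXa (by positivity)
          ((mul_nonneg hβ0 (Real.sqrt_nonneg X)).trans (hbX hX4))

lemma abs_integratingFactor_mul_le {n : ℕ} {r₀ ε γ t a b v q Q C₀ : ℝ} (hn : 2 ≤ n)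
    (hr₀ : 0 < r₀) (hε : 0 < ε) (hε1 : ε ≤ 1) (hγ0 : 0 ≤ γ) (hγ2 : γ ≤ 2)
    (ht : r₀ / 2 ≤ t) (ht1 : t ≤ 1)
    (ha : |a| ≤ C₀ * max (t - r₀) 0 ^ γ / (ε + max (t - r₀) 0 ^ 2) ^ ((1 : ℝ) / 2))
    (hb : |b| ≤ C₀ * max (t - r₀) 0 ^ γ / (ε + max (t - r₀) 0 ^ 2))
    (hv : |v| ≤ C₀) (hq : |q| ≤ Q) :
    |integratingFactor n r₀ ε t * (b + q * v - bCoeff n r₀ ε t * a)| ≤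
      fluxDerivConst n Q r₀ C₀ * (ε + max (t - r₀) 0 ^ γ) := by
  have hA := integratingFactor_mul_bCoeff_mul_abs_le hn hr₀ hε hε1 ht ht1 ha
  set w := max (t - r₀) 0
  set X := ε + w ^ 2
  set μ := integratingFactor n r₀ ε t
  set β := bCoeff n r₀ ε t
  have ht0 : 0 < t := by linarith
  have hn' : (0 : ℝ) ≤ (n : ℝ) - 2 := by rw [sub_nonneg]; exact_mod_cast hn
  have hw0 : 0 ≤ w := le_max_right _ _
  have hX0 : 0 < X := by positivity
  have hXle : X ≤ ε + w ^ γ := by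
    have : w ^ 2 ≤ w ^ γ := by
      rw [← Real.rpow_natCast]
      exact Real.rpow_le_rpow_of_exponent_ge' hw0 (max_le (by linarith) zero_le_one) hγ0
        (by norm_num; linarith)
    linarith
  have hμ0 : 0 ≤ μ := integratingFactor_nonneg ht0.le hε.le
  have hμX : μ ≤ X := integratingFactor_le hn ht0.le ht1 hε.le
  have hβ0 : 0 ≤ β := bCoeff_nonneg hn ht0.le hε.le
  have hC₀ : 0 ≤ C₀ := (abs_nonneg v).trans hv
  have hQ : 0 ≤ Q := (abs_nonneg q).trans hq
  have hB : μ * |b| ≤ C₀ * w ^ γ :=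
    calc μ * |b| ≤ X * (C₀ * w ^ γ / X) := mul_le_mul hμX hb (abs_nonneg b) hX0.le
      _ = C₀ * w ^ γ := by field_simp
  have hV : μ * |q * v| ≤ Q * C₀ * (ε + w ^ γ) :=
    calc μ * |q * v| ≤ X * (Q * C₀) := by
          rw [abs_mul]
          exact mul_le_mul hμX (mul_le_mul hq hv (abs_nonneg v) hQ) (by positivity) hX0.le
      _ ≤ (ε + w ^ γ) * (Q * C₀) := by gcongr
      _ = Q * C₀ * (ε + w ^ γ) := by ring
  have htri : |b + q * v - β * a| ≤ |b| + |q * v| + β * |a| := by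
    calc |b + q * v - β * a| ≤ |b + q * v| + |β * a| := abs_sub _ _
      _ ≤ |b| + |q * v| + β * |a| := by
          rw [abs_mul, abs_of_nonneg hβ0]; gcongr; exact abs_add_le _ _
  have hP : 0 ≤ 4 * ((n : ℝ) - 2) / r₀ + 2 := by positivity
  calc |μ * (b + q * v - β * a)| ≤ μ * |b| + μ * |q * v| + μ * (β * |a|) := by
        rw [abs_mul, abs_of_nonneg hμ0]
        nlinarith
    _ ≤ C₀ * w ^ γ + Q * C₀ * (ε + w ^ γ) + (4 * ((n : ℝ) - 2) / r₀ + 2) * (C₀ * w ^ γ) := by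
        gcongr
    _ ≤ fluxDerivConst n Q r₀ C₀ * (ε + w ^ γ) := by
        unfold fluxDerivConst
        nlinarith [mul_nonneg hP (mul_nonneg hC₀ hε.le), mul_nonneg hC₀ hε.le]

lemma abs_flux_half_le {n : ℕ} {r₀ γ C₀ ε : ℝ} {V A : ℝ → ℝ} (hn : 2 ≤ n) (hr₀ : 0 < r₀)
    (hr₀2 : r₀ ≤ 2) (hγ : γ ≠ 0) (hε : 0 ≤ ε) (hV : |deriv V (r₀ / 2)| ≤ C₀)
    (hA : |A (r₀ / 2)| ≤
      C₀ * max (r₀ / 2 - r₀) 0 ^ γ / (ε + max (r₀ / 2 - r₀) 0 ^ 2) ^ ((1:ℝ)/2)) :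
    |flux n r₀ ε V A (r₀ / 2)| ≤ C₀ * ε := by
  have hw : max (r₀ / 2 - r₀) 0 = 0 := max_eq_right (by linarith)
  have hA0 : A (r₀ / 2) = 0 := by simpa [hw, Real.zero_rpow hγ] using hA
  have hμ : integratingFactor n r₀ ε (r₀ / 2) ≤ ε := by
    simpa [hw] using
      integratingFactor_le (r₀ := r₀) (t := r₀ / 2) hn (by positivity) (by linarith) hε
  rw [flux, hA0, sub_zero, abs_mul, abs_of_nonneg (integratingFactor_nonneg (by positivity) hε)]
  nlinarith [abs_nonneg (deriv V (r₀ / 2))]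

lemma abs_flux_le {n : ℕ} {r₀ γ C₀ ε κ r : ℝ} {V A B : ℝ → ℝ} (hn : 2 ≤ n) (hr₀ : 0 < r₀)
    (hγ0 : 0 < γ) (hγ2 : γ ≤ 2) (hε : 0 < ε) (hε1 : ε ≤ 1)
    (hVb : ∀ r ∈ Ioo (0:ℝ) 1, |V r| ≤ C₀)
    (hV2 : ∀ r ∈ Ioo (0:ℝ) 1, DifferentiableAt ℝ (deriv V) r)
    (hV's : |deriv V (r₀ / 2)| ≤ C₀)
    (hA1 : ∀ r ∈ Ioo (0:ℝ) 1, DifferentiableAt ℝ A r)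
    (hAb : ∀ r ∈ Ioo (0:ℝ) 1,
      |A r| ≤ C₀ * max (r - r₀) 0 ^ γ / (ε + max (r - r₀) 0 ^ 2) ^ ((1:ℝ)/2))
    (hBb : ∀ r ∈ Ioo (0:ℝ) 1,
      |B r| ≤ C₀ * max (r - r₀) 0 ^ γ / (ε + max (r - r₀) 0 ^ 2))
    (hODE : ∀ r ∈ Ioo (0:ℝ) 1,
      deriv (deriv V) r + bCoeff n r₀ ε r * deriv V r - (κ / r ^ 2) * V r = deriv A r + B r)
    (hr : r ∈ Ico (r₀ / 2) 1) :
    |flux n r₀ ε V A r| ≤ C₀ * ε +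
      fluxDerivConst n (|κ| / (r₀ / 2) ^ 2) r₀ C₀ *
        (ε * (r - r₀ / 2) + max (r - r₀) 0 ^ (γ + 1)) := by
  set s := r₀ / 2 with hs_def
  set K := fluxDerivConst n (|κ| / (r₀ / 2) ^ 2) r₀ C₀
  obtain ⟨hsr, hr1⟩ := hr
  have hs : 0 < s := by positivity
  have hI : ∀ t ∈ Icc s r, t ∈ Ioo (0:ℝ) 1 := fun t ht => ⟨by linarith [ht.1], by linarith [ht.2]⟩
  have hC₀ : 0 ≤ C₀ := (abs_nonneg _).trans hV's
  have hK : 0 ≤ K := fluxDerivConst_nonneg hn (by positivity) hr₀ hC₀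
  have hderiv : ∀ t ∈ Icc s r, HasDerivAt (flux n r₀ ε V A)
      (integratingFactor n r₀ ε t * (B t + κ / t ^ 2 * V t - bCoeff n r₀ ε t * A t)) t :=
    fun t ht => hasDerivAt_flux (q := fun t => κ / t ^ 2) hε (hI t ht).1 (hV2 t (hI t ht))
      (hA1 t (hI t ht)) (hODE t (hI t ht))
  have hbound : ∀ x, HasDerivAt (fun t => C₀ * ε + K * (ε * (t - s) + max (t - r₀) 0 ^ (γ + 1)))
      (K * (ε + (γ + 1) * max (x - r₀) 0 ^ γ)) x := by
    intro x
    have h := (((hasDerivAt_id x).sub_const s).const_mul ε).add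
      (hasDerivAt_max_sub_zero_rpow r₀ x (by linarith : 1 < γ + 1))
    simpa using (h.const_mul K).const_add (C₀ * ε)
  have hflux_s : ‖flux n r₀ ε V A s‖ ≤ C₀ * ε + K * (ε * (s - s) + max (s - r₀) 0 ^ (γ + 1)) := by
    have hws : max (s - r₀) 0 = 0 := max_eq_right (by linarith [hs_def])
    rw [Real.norm_eq_abs, hws, Real.zero_rpow (by linarith)]
    simpa using abs_flux_half_le hn hr₀ (by linarith [hs_def]) hγ0.ne' hε.le hV's
      (hAb s (hI s ⟨le_rfl, hsr⟩))
  refine image_norm_le_of_norm_deriv_right_le_deriv_boundary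
    (fun t ht => (hderiv t ht).continuousAt.continuousWithinAt)
    (fun t ht => (hderiv t (Ico_subset_Icc_self ht)).hasDerivWithinAt) hflux_s hbound
    (fun t ht => ?_) ⟨hsr, le_rfl⟩
  obtain ⟨ht0, ht1⟩ := hI t (Ico_subset_Icc_self ht)
  rw [Real.norm_eq_abs]
  calc _ ≤ K * (ε + max (t - r₀) 0 ^ γ) :=
        abs_integratingFactor_mul_le hn hr₀ hε hε1 hγ0.le hγ2 ht.1 ht1.le
          (hAb t ⟨ht0, ht1⟩) (hBb t ⟨ht0, ht1⟩) (hVb t ⟨ht0, ht1⟩) (abs_div_sq_le hs ht.1)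
    _ ≤ K * (ε + (γ + 1) * max (t - r₀) 0 ^ γ) := by
        gcongr; nlinarith [Real.rpow_nonneg (le_max_right (t - r₀) 0) γ]

lemma abs_deriv_le_of_abs_flux_le {n : ℕ} {r₀ γ C₀ ε K r : ℝ} {V A : ℝ → ℝ} (hn : 2 ≤ n)
    (hr₀ : 0 < r₀) (hγ0 : 0 ≤ γ) (hγ1 : γ ≤ 1) (hε : 0 < ε) (hε1 : ε ≤ 1) (hK : 0 ≤ K)
    (hC₀ : 0 ≤ C₀) (hr : r ∈ Ico (r₀ / 2) 1)
    (hflux : |flux n r₀ ε V A r| ≤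
      C₀ * ε + K * (ε * (r - r₀ / 2) + max (r - r₀) 0 ^ (γ + 1)))
    (hA : |A r| ≤ C₀ * max (r - r₀) 0 ^ γ / (ε + max (r - r₀) 0 ^ 2) ^ ((1:ℝ)/2)) :
    |deriv V r| ≤ (C₀ + (2 * C₀ + 3 * K) / (r₀ / 2) ^ ((n : ℝ) - 2)) *
      (ε + max (r - r₀) 0 ^ 2) ^ ((γ - 1) / 2) := by
  obtain ⟨hsr, hr1⟩ := hr
  set m := (r₀ / 2) ^ ((n : ℝ) - 2)
  set w := max (r - r₀) 0
  set X := ε + w ^ 2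
  set P := X ^ ((γ - 1) / 2)
  have hn' : (0 : ℝ) ≤ (n : ℝ) - 2 := by rw [sub_nonneg]; exact_mod_cast hn
  have hm : 0 < m := by positivity
  have hw0 : 0 ≤ w := le_max_right _ _
  have hw1 : w ≤ 1 := max_le (by linarith) zero_le_one
  have hX0 : 0 < X := by positivity
  have hεX0 : ε ≤ X := le_add_of_nonneg_right (sq_nonneg w)
  have hwX2 : w ^ 2 ≤ X := le_add_of_nonneg_left hε.le
  have hP : X ^ ((γ + 1) / 2) = X * P := by
    rw [show (γ + 1) / 2 = 1 + (γ - 1) / 2 by ring, Real.rpow_add hX0, Real.rpow_one]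
  have hεX : ε ≤ 2 * (X * P) :=
    hP ▸ (self_le_two_mul_rpow hX0.le (by nlinarith) (by linarith) (by linarith)).trans' hεX0
  have hwX : w ^ (γ + 1) ≤ X * P := hP ▸ rpow_le_rpow_half_of_sq_le hw0 hwX2 (by linarith)
  have hμ : m * X ≤ integratingFactor n r₀ ε r :=
    mul_le_mul_of_nonneg_right (Real.rpow_le_rpow (by positivity) hsr hn') hX0.le
  have hVA : |deriv V r - A r| ≤ (2 * C₀ + 3 * K) / m * P := by
    have h : m * X * |deriv V r - A r| ≤ m * X * ((2 * C₀ + 3 * K) / m * P) := by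
      calc m * X * |deriv V r - A r| ≤ |flux n r₀ ε V A r| := by
            rw [flux, abs_mul, abs_of_nonneg (integratingFactor_nonneg (by linarith) hε.le)]
            gcongr
        _ ≤ C₀ * ε + K * (ε * (r - r₀ / 2) + w ^ (γ + 1)) := hflux
        _ ≤ C₀ * (2 * (X * P)) + K * (2 * (X * P) + X * P) := by
            have h1 : ε * (r - r₀ / 2) ≤ 2 * (X * P) := by nlinarith
            exact add_le_add (mul_le_mul_of_nonneg_left hεX hC₀)
              (mul_le_mul_of_nonneg_left (add_le_add h1 hwX) hK)
        _ = m * X * ((2 * C₀ + 3 * K) / m * P) := by field_simp; ring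
    exact le_of_mul_le_mul_left h (by positivity)
  have hAP : |A r| ≤ C₀ * P := by
    calc |A r| ≤ C₀ * w ^ γ / X ^ ((1:ℝ)/2) := hA
      _ ≤ C₀ * X ^ (γ / 2) / X ^ ((1:ℝ)/2) := by
          gcongr; exact rpow_le_rpow_half_of_sq_le hw0 hwX2 hγ0
      _ = C₀ * P := by
          rw [mul_div_assoc, ← Real.rpow_sub hX0, show γ / 2 - 1 / 2 = (γ - 1) / 2 by ring]
  calc |deriv V r| ≤ |deriv V r - A r| + |A r| := by
        linarith [abs_sub_abs_le_abs_sub (deriv V r) (A r)]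
    _ ≤ (2 * C₀ + 3 * K) / m * P + C₀ * P := add_le_add hVA hAP
    _ = (C₀ + (2 * C₀ + 3 * K) / m) * P := by ring

theorem stmt16_general (n k : ℕ) (hn : 2 ≤ n) (r₀ γ C₀ : ℝ)
    (hr₀ : r₀ ∈ Ioo (0:ℝ) (1/2)) (hγ : γ ∈ Ioo (0:ℝ) 1) (hC₀ : 0 < C₀) :
    ∃ C : ℝ, 0 < C ∧
      ∀ ε : ℝ, ε ∈ Ioo (0:ℝ) (1/4) →
      ∀ V A B : ℝ → ℝ,
        ContinuousOn V (Ico 0 1) → V 0 = 0 →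
        (∀ r ∈ Ioo (0:ℝ) 1, |V r| ≤ C₀) →
        (∀ r ∈ Ioo (0:ℝ) 1, DifferentiableAt ℝ V r) →
        (∀ r ∈ Ioo (0:ℝ) 1, DifferentiableAt ℝ (deriv V) r) →
        ContinuousOn (deriv (deriv V)) (Ioo 0 1) →
        |deriv V (r₀/2)| ≤ C₀ →
        (∀ r ∈ Ioo (0:ℝ) 1, DifferentiableAt ℝ A r) →
        ContinuousOn (deriv A) (Ioo 0 1) →
        ContinuousOn B (Ioo 0 1) →
        (∀ r ∈ Ioo (0:ℝ) 1,
          |A r| ≤ C₀ * max (r - r₀) 0 ^ γ / (ε + max (r - r₀) 0 ^ 2) ^ ((1:ℝ)/2)) →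
        (∀ r ∈ Ioo (0:ℝ) 1,
          |B r| ≤ C₀ * max (r - r₀) 0 ^ γ / (ε + max (r - r₀) 0 ^ 2)) →
        (∀ r ∈ Ioo (0:ℝ) 1,
          deriv (deriv V) r + bCoeff n r₀ ε r * deriv V r -
            ((k : ℝ) * ((k : ℝ) + (n : ℝ) - 3) / r ^ 2) * V r = deriv A r + B r) →
        ∀ r ∈ Ico (r₀/2) 1,
          |deriv V r| ≤ C * (ε + max (r - r₀) 0 ^ 2) ^ ((γ - 1)/2) := by
  obtain ⟨hr₀0, -⟩ := hr₀
  obtain ⟨hγ0, hγ1⟩ := hγ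
  set K := fluxDerivConst n (|(k : ℝ) * ((k : ℝ) + (n : ℝ) - 3)| / (r₀ / 2) ^ 2) r₀ C₀
  have hK : 0 ≤ K := fluxDerivConst_nonneg hn (by positivity) hr₀0 hC₀.le
  refine ⟨C₀ + (2 * C₀ + 3 * K) / (r₀ / 2) ^ ((n : ℝ) - 2),
    add_pos_of_pos_of_nonneg hC₀ (div_nonneg (by linarith) (by positivity)), ?_⟩
  intro ε hε V A B _ _ hVb _ hV2 _ hV's hA1 _ _ hAb hBb hODE r hr
  have hε1 : ε ≤ 1 := by linarith [hε.2]
  exact abs_deriv_le_of_abs_flux_le hn hr₀0 hγ0.le hγ1.le hε.1 hε1 hK hC₀.le hr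
    (abs_flux_le hn hr₀0 hγ0 (by linarith) hε.1 hε1 hVb hV2 hV's hA1 hAb hBb hODE hr)
    (hAb r ⟨by linarith [hr.1], hr.2⟩)

/-- Let `n ≥ 2`, `k ≥ 1`, `γ ∈ (0,1)`, `ε ∈ (0,1/4)`, `r₀ ∈ (0,1/2)`,
`C₀ > 0`. If `V ∈ C²((0,1)) ∩ C([0,1))` satisfies `V(0) = 0`, `|V| ≤ C₀`,
`|V'(r₀/2)| ≤ C₀` and `V'' + b V' − (k(k+n−3)/r²) V = A' + B` on `(0,1)` with
`|A(r)| ≤ C₀ (r−r₀)₊^γ (ε+(r−r₀)₊²)^{−1/2}` and `|B(r)| ≤ C₀ (r−r₀)₊^γ (ε+(r−r₀)₊²)^{−1}`,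
then `|V'(r)| ≤ C (ε + (r−r₀)₊²)^{(γ−1)/2}` on `[r₀/2, 1)`, where `C > 0` depends only on
`n`, `k`, `r₀`, `γ`, `C₀` (in particular `C` is independent of `ε`). -/
theorem stmt16 (n k : ℕ) (hn : 2 ≤ n) (hk : 1 ≤ k) (r₀ γ C₀ : ℝ)
    (hr₀ : r₀ ∈ Ioo (0:ℝ) (1/2)) (hγ : γ ∈ Ioo (0:ℝ) 1) (hC₀ : 0 < C₀) :
    ∃ C : ℝ, 0 < C ∧
      ∀ ε : ℝ, ε ∈ Ioo (0:ℝ) (1/4) →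
      ∀ V A B : ℝ → ℝ,
        ContinuousOn V (Ico 0 1) → V 0 = 0 →
        (∀ r ∈ Ioo (0:ℝ) 1, |V r| ≤ C₀) →
        (∀ r ∈ Ioo (0:ℝ) 1, DifferentiableAt ℝ V r) →
        (∀ r ∈ Ioo (0:ℝ) 1, DifferentiableAt ℝ (deriv V) r) →
        ContinuousOn (deriv (deriv V)) (Ioo 0 1) →
        |deriv V (r₀/2)| ≤ C₀ →
        (∀ r ∈ Ioo (0:ℝ) 1, DifferentiableAt ℝ A r) →
        ContinuousOn (deriv A) (Ioo 0 1) →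
        ContinuousOn B (Ioo 0 1) →
        (∀ r ∈ Ioo (0:ℝ) 1,
          |A r| ≤ C₀ * max (r - r₀) 0 ^ γ / (ε + max (r - r₀) 0 ^ 2) ^ ((1:ℝ)/2)) →
        (∀ r ∈ Ioo (0:ℝ) 1,
          |B r| ≤ C₀ * max (r - r₀) 0 ^ γ / (ε + max (r - r₀) 0 ^ 2)) →
        (∀ r ∈ Ioo (0:ℝ) 1,
          deriv (deriv V) r + bCoeff n r₀ ε r * deriv V r -
            ((k : ℝ) * ((k : ℝ) + (n : ℝ) - 3) / r ^ 2) * V r = deriv A r + B r) →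
        ∀ r ∈ Ico (r₀/2) 1,
          |deriv V r| ≤ C * (ε + max (r - r₀) 0 ^ 2) ^ ((γ - 1)/2) :=
  stmt16_general n k hn r₀ γ C₀ hr₀ hγ hC₀
end
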